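/- Let X and Y be real Hilbert spaces, let P_X : X → X and P_Y : Y → Y be orthogonal projections (bounded linear idempotent self-adjoint operators), let F : X → Y be a bijection whose inverse F^{−1} is Lipschitz with constant L', and let ν be a measure on Y such that the functions y ↦ ‖P_Y y − y‖² and y ↦ ‖P_X(F^{−1}(y)) − F^{−1}(y)‖² are ν-integrable. Then ∫_Y ‖P_X(F^{−1}(P_Y y)) − F^{−1}(y)‖² dν(y) ≤ 2·(L')²·∫_Y ‖P_Y y − y‖² dν(y) + 2·∫_Y ‖P_X(F^{−1}(y)) − F^{−1}(y)‖² dν(y). -/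

import Mathlib

open MeasureTheory
open scoped NNReal

/-! A self-adjoint idempotent is norm-nonincreasing, as `‖P x‖² = ⟪x, P x⟫ ≤ ‖x‖ ‖P x‖`, so
`P_X ∘ F⁻¹` is `L'`-Lipschitz. The triangle inequality through `P_X (F⁻¹ y)` together with
`(a + b)² ≤ 2 (a² + b²)` then bounds the integrand pointwise, and the bound integrates. -/

theorem LinearMap.IsSymmetric.norm_map_le_of_idempotent {𝕜 E : Type*} [RCLike 𝕜]
    [NormedAddCommGroup E] [InnerProductSpace 𝕜 E] {T : E →ₗ[𝕜] E} (hT : T.IsSymmetric)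
    (hidem : ∀ x, T (T x) = T x) (x : E) : ‖T x‖ ≤ ‖x‖ := by
  have hsq : ‖T x‖ ^ 2 ≤ ‖x‖ * ‖T x‖ :=
    calc ‖T x‖ ^ 2 = RCLike.re (inner 𝕜 (T x) (T x)) := (inner_self_eq_norm_sq _).symm
      _ = RCLike.re (inner 𝕜 x (T x)) := by rw [hT, hidem]
      _ ≤ ‖x‖ * ‖T x‖ := re_inner_le_norm _ _
  rcases (norm_nonneg (T x)).eq_or_lt with h | h
  · exact h ▸ norm_nonneg x
  · nlinarith

theorem LipschitzWith.norm_sub_sq_le {X Y : Type*} [SeminormedAddCommGroup X]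
    [SeminormedAddCommGroup Y] {K : ℝ≥0} {f : Y → X} (hf : LipschitzWith K f) (g : Y → X)
    (z y : Y) :
    ‖f z - g y‖ ^ 2 ≤ 2 * (K : ℝ) ^ 2 * ‖z - y‖ ^ 2 + 2 * ‖f y - g y‖ ^ 2 := by
  have hlip : ‖f z - f y‖ ≤ K * ‖z - y‖ := hf.norm_sub_le z y
  calc ‖f z - g y‖ ^ 2 ≤ (‖f z - f y‖ + ‖f y - g y‖) ^ 2 := by
        gcongr; exact norm_sub_le_norm_sub_add_norm_sub _ _ _
    _ ≤ 2 * (‖f z - f y‖ ^ 2 + ‖f y - g y‖ ^ 2) := add_sq_le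
    _ ≤ 2 * ((K * ‖z - y‖) ^ 2 + ‖f y - g y‖ ^ 2) := by gcongr
    _ = 2 * (K : ℝ) ^ 2 * ‖z - y‖ ^ 2 + 2 * ‖f y - g y‖ ^ 2 := by ring

theorem pca_inverse_error {X Y : Type*}
    [NormedAddCommGroup X] [InnerProductSpace ℝ X]
    [NormedAddCommGroup Y] [InnerProductSpace ℝ Y]
    [MeasurableSpace Y]
    (PX : X →L[ℝ] X) (PY : Y →L[ℝ] Y)
    (hPXidem : ∀ x : X, PX (PX x) = PX x)
    (hPXsa : ∀ x y : X, (inner ℝ (PX x) y : ℝ) = inner ℝ x (PX y))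
    (Finv : Y → X)
    (L' : ℝ≥0) (hFinv : LipschitzWith L' Finv)
    (ν : Measure Y)
    (hint1 : Integrable (fun y : Y => ‖PY y - y‖ ^ 2) ν)
    (hint2 : Integrable (fun y : Y => ‖PX (Finv y) - Finv y‖ ^ 2) ν) :
    ∫ y, ‖PX (Finv (PY y)) - Finv y‖ ^ 2 ∂ν ≤
      2 * (L' : ℝ) ^ 2 * ∫ y, ‖PY y - y‖ ^ 2 ∂ν +
      2 * ∫ y, ‖PX (Finv y) - Finv y‖ ^ 2 ∂ν := by
  have hPX : LipschitzWith 1 PX := AddMonoidHomClass.lipschitz_of_bound_nnnorm PX 1 fun x => by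
    simpa [← NNReal.coe_le_coe] using LinearMap.IsSymmetric.norm_map_le_of_idempotent (T := (PX : X →ₗ[ℝ] X))
      hPXsa hPXidem x
  have hpoint (y : Y) := (hPX.comp hFinv).norm_sub_sq_le Finv (PY y) y
  simp only [one_mul, Function.comp_apply] at hpoint
  calc ∫ y, ‖PX (Finv (PY y)) - Finv y‖ ^ 2 ∂ν
      ≤ ∫ y, 2 * (L' : ℝ) ^ 2 * ‖PY y - y‖ ^ 2 + 2 * ‖PX (Finv y) - Finv y‖ ^ 2 ∂ν :=
        integral_mono_of_nonneg (.of_forall fun _ => by positivity)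
          ((hint1.const_mul _).add (hint2.const_mul _)) (.of_forall hpoint)
    _ = 2 * (L' : ℝ) ^ 2 * ∫ y, ‖PY y - y‖ ^ 2 ∂ν +
        2 * ∫ y, ‖PX (Finv y) - Finv y‖ ^ 2 ∂ν := by
        rw [integral_add (hint1.const_mul _) (hint2.const_mul _), integral_const_mul,
          integral_const_mul]
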